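/- arXiv:2104.13143 — 3 statements merged into one kernel-verified Lean document; each statement's English description precedes it below -/
import Mathlib

section
/- Let T, Q be real symmetric positive definite n×n matrices, R a real n×n matrix, and suppose E ∈ ℂ^{n×n} satisfies T E² − i(R+Rᵀ)E − Q = 0 with Re spec E > 0. Then the matrix M = T E − i Rᵀ is Hermitian. -/
/-!
With `N = i Rᵀ` and `M = T E - N`, a direct expansion gives
`Eᴴ (M - Mᴴ) + (M - Mᴴ) E = F - Fᴴ` for `F = T E² - (N - Nᴴ) E`, and the Riccati equation says
`F = Q`, which is Hermitian. So `M - Mᴴ` solves the homogeneous Lyapunov equation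
`Eᴴ X + X E = 0`. Since `Re spec E > 0`, the spectra of `Eᴴ` and `-E` are disjoint, and a
Sylvester equation `A X = X B` with disjoint spectra only has the solution `X = 0`: applying
`χ_A` to both sides gives `0 = X χ_A(B)`, and `χ_A(B)` is invertible by spectral mapping.
-/

open Matrix Polynomial

theorem Polynomial.aeval_mul_eq_mul_aeval_of_mul_eq_mul {R A : Type*} [CommSemiring R]
    [Semiring A] [Algebra R A] {a b x : A} (h : a * x = x * b) (p : R[X]) :
    aeval a p * x = x * aeval b p := by
  have hpow (k : ℕ) : a ^ k * x = x * b ^ k := (SemiconjBy.pow_right (a := x) h.symm k).symm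
  induction p using Polynomial.induction_on' with
  | add p q hp hq => rw [map_add, map_add, add_mul, mul_add, hp, hq]
  | monomial k c =>
    rw [aeval_monomial, aeval_monomial, mul_assoc, hpow, ← mul_assoc, ← mul_assoc,
      Algebra.commutes]

theorem Matrix.eq_zero_of_mul_eq_mul_of_disjoint_spectrum {K n : Type*} [Field K]
    [IsAlgClosed K] [Fintype n] [DecidableEq n] {A B X : Matrix n n K}
    (hAB : Disjoint (spectrum K A) (spectrum K B)) (h : A * X = X * B) : X = 0 := by
  rcases isEmpty_or_nonempty n with _ | _
  · exact Subsingleton.elim _ _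
  have hunit : IsUnit (aeval B A.charpoly) := by
    refine spectrum.isUnit_of_zero_notMem K ?_
    rw [spectrum.map_polynomial_aeval_of_degree_pos B A.charpoly
      (by rw [charpoly_degree_eq_dim]; exact_mod_cast Fintype.card_pos)]
    rintro ⟨μ, hμB, hμA⟩
    exact hAB.notMem_of_mem_right hμB (mem_spectrum_iff_isRoot_charpoly.mpr hμA)
  have hX : X * aeval B A.charpoly = 0 := by
    rw [← aeval_mul_eq_mul_aeval_of_mul_eq_mul h, aeval_self_charpoly, zero_mul]
  exact hunit.mul_left_eq_zero.mp hX

theorem Matrix.eq_zero_of_star_mul_add_mul_eq_zero {n : Type*} [Fintype n] [DecidableEq n]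
    {E X : Matrix n n ℂ} (hE : ∀ μ ∈ spectrum ℂ E, 0 < μ.re)
    (h : star E * X + X * E = 0) : X = 0 := by
  refine eq_zero_of_mul_eq_mul_of_disjoint_spectrum (A := star E) (B := -E) ?_ ?_
  · rw [spectrum.map_star, ← spectrum.neg_eq, Set.disjoint_left]
    intro μ hμ hμ'
    have h1 : 0 < μ.re := by simpa using hE _ (Set.mem_star.mp hμ)
    have h2 : 0 < -μ.re := by simpa using hE _ (Set.mem_neg.mp hμ')
    linarith
  · rw [mul_neg, eq_neg_iff_add_eq_zero, h]

theorem IsSelfAdjoint.star_mul_sub_star_add_sub_star_mul {A : Type*} [Ring A] [StarRing A]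
    {T : A} (hT : IsSelfAdjoint T) (E N : A) :
    star E * ((T * E - N) - star (T * E - N)) + ((T * E - N) - star (T * E - N)) * E
      = (T * E ^ 2 - (N - star N) * E) - star (T * E ^ 2 - (N - star N) * E) := by
  simp only [star_sub, star_mul, star_pow, hT.star_eq, star_star]
  noncomm_ring

theorem Matrix.IsHermitian.isSelfAdjoint_map_ofReal {n : Type*} {A : Matrix n n ℝ}
    (hA : A.IsHermitian) : IsSelfAdjoint (A.map Complex.ofReal) :=
  (hA.map Complex.ofReal fun r => (Complex.conj_ofReal r).symm).isSelfAdjoint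

/-- if `T, Q` are real symmetric positive definite, `R` real, and
`E ∈ ℂ^{n×n}` satisfies `T E² − i(R+Rᵀ)E − Q = 0` with `Re spec E > 0`, then
`M = T E − i Rᵀ` is Hermitian. -/
theorem stmt9 (n : ℕ) (T Q R : Matrix (Fin n) (Fin n) ℝ)
    (hT : T.PosDef) (hQ : Q.PosDef)
    (E : Matrix (Fin n) (Fin n) ℂ)
    (hE : ∀ μ ∈ spectrum ℂ E, 0 < μ.re)
    (heq : (T.map (Complex.ofReal)) * E ^ 2
        - Complex.I • (((R + Rᵀ).map Complex.ofReal) * E)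
        - Q.map Complex.ofReal = 0) :
    ((T.map Complex.ofReal) * E - Complex.I • (Rᵀ.map Complex.ofReal)).IsHermitian := by
  set N := Complex.I • Rᵀ.map Complex.ofReal
  have hN : N - star N = Complex.I • (R + Rᵀ).map Complex.ofReal := by
    ext i j
    simp only [N, star_smul, RCLike.star_def, Complex.conj_I, neg_smul, Matrix.sub_apply,
      Matrix.smul_apply, map_apply, transpose_apply, smul_eq_mul, Matrix.neg_apply, star_apply,
      Complex.conj_ofReal, sub_neg_eq_add, Matrix.add_apply, Complex.ofReal_add]
    ring
  have hriccati : T.map Complex.ofReal * E ^ 2 - (N - star N) * E = Q.map Complex.ofReal := by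
    rw [hN, smul_mul_assoc]
    exact sub_eq_zero.mp heq
  set M := T.map Complex.ofReal * E - N
  have hlyapunov : star E * (M - star M) + (M - star M) * E = 0 := by
    rw [hT.1.isSelfAdjoint_map_ofReal.star_mul_sub_star_add_sub_star_mul, hriccati,
      hQ.1.isSelfAdjoint_map_ofReal.star_eq, sub_self]
  exact (sub_eq_zero.mp (eq_zero_of_star_mul_add_mul_eq_zero hE hlyapunov)).symm
end

section
/- Let E ∈ ℂ^{n×n} with all eigenvalues having positive real part. For θ ∈ [0,π] define E(θ) = (cos θ · 𝟙 + i sin θ · E)^{-1}(cos θ · E + i sin θ · 𝟙). Then cos θ·𝟙 + i sin θ·E is invertible for each θ, E(θ) solves the matrix ODE E'(θ) = i(𝟙 − E(θ)²) with E(0) = E, and ∫₀^π E(θ) dθ = π·𝟙. -/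
open Matrix MeasureTheory

attribute [local instance] Matrix.linftyOpNormedAddCommGroup Matrix.linftyOpNormedRing
  Matrix.linftyOpNormedSpace Matrix.linftyOpNormedAlgebra

/-- the rotated matrix `E(θ) = (cos θ·𝟙 + i sin θ·E)⁻¹ (cos θ·E + i sin θ·𝟙)` -/
noncomputable def Erot {n : ℕ} (E : Matrix (Fin n) (Fin n) ℂ) (θ : ℝ) :
    Matrix (Fin n) (Fin n) ℂ :=
  ((Real.cos θ : ℂ) • (1 : Matrix (Fin n) (Fin n) ℂ) + (Complex.I * Real.sin θ) • E)⁻¹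
    * ((Real.cos θ : ℂ) • E + (Complex.I * Real.sin θ) • (1 : Matrix (Fin n) (Fin n) ℂ))

/-! With `A θ = cos θ • 1 + (i sin θ) • x` and `B θ = cos θ • x + (i sin θ) • 1` one has `A' = i B`,
`B' = i A` and `cos θ • A - (i sin θ) • B = 1`. The first two give the Riccati equation for
`A⁻¹ B`; all three give `(sin θ • A⁻¹)' = A⁻²`, so `∫₀^π A⁻² = 0`. Along the segment `x_t` from `1`
to `x` the spectrum stays in the right half plane, so every `A_t θ` is invertible, and
`∂_t (A_t⁻¹ B_t) = A_t⁻² (x - 1)` integrates to zero in `θ`. Exchanging the two integrals shows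
that `∫₀^π A_t⁻¹ B_t dθ` does not depend on `t`; at `t = 0` the integrand is `1`. -/

open scoped Ring Real
open Complex Set

theorem Commute.ringInverse_left {M₀ : Type*} [MonoidWithZero M₀] {a b : M₀}
    (h : Commute a b) : Commute a⁻¹ʳ b := by
  by_cases ha : IsUnit a
  · rw [Ring.inverse_of_isUnit ha]
    exact Commute.units_inv_left (by rwa [ha.unit_spec])
  · rw [Ring.inverse_non_unit a ha]
    exact Commute.zero_left b

theorem ContinuousAt.ringInverse {X R : Type*} [TopologicalSpace X] [NormedRing R]
    [HasSummableGeomSeries R] {f : X → R} {p : X} (hf : ContinuousAt f p) (hp : IsUnit (f p)) :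
    ContinuousAt (fun q => (f q)⁻¹ʳ) p :=
  (NormedRing.inverse_continuousAt hp.unit).comp_of_eq hf hp.unit_spec.symm

theorem HasDerivAt.ringInverse {𝕜 R : Type*} [NontriviallyNormedField 𝕜] [NormedRing R]
    [NormedAlgebra 𝕜 R] [CompleteSpace R] {f : 𝕜 → R} {f' : R} {x : 𝕜}
    (hf : HasDerivAt f f' x) (hx : IsUnit (f x)) :
    HasDerivAt (fun y => (f y)⁻¹ʳ) (-((f x)⁻¹ʳ * f' * (f x)⁻¹ʳ)) x := by
  obtain ⟨u, hu⟩ := hx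
  have h := hasFDerivAt_ringInverse (𝕜 := 𝕜) u
  rw [hu] at h
  simpa [Function.comp_def, ← hu, Ring.inverse_unit] using h.comp_hasDerivAt x hf

theorem intervalIntegral_sub_eq_zero_of_hasDerivAt_of_integral_eq_zero
    {E : Type*} [NormedAddCommGroup E] [NormedSpace ℝ E] [CompleteSpace E]
    {F G : ℝ → ℝ → E} {a b c d : ℝ}
    (hF : ∀ t ∈ uIcc c d, ∀ θ ∈ uIcc a b, HasDerivAt (F · θ) (G t θ) t)
    (hG : ContinuousOn (Function.uncurry G) (uIcc c d ×ˢ uIcc a b))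
    (hG0 : ∀ t ∈ uIcc c d, ∫ θ in a..b, G t θ = 0) :
    ∫ θ in a..b, (F d θ - F c θ) = 0 := by
  have hGswap : ContinuousOn (fun p : ℝ × ℝ => G p.2 p.1) (uIcc a b ×ˢ uIcc c d) :=
    hG.comp continuous_swap.continuousOn fun p hp => ⟨hp.2, hp.1⟩
  calc ∫ θ in a..b, (F d θ - F c θ) = ∫ θ in a..b, ∫ t in c..d, G t θ := by
        refine intervalIntegral.integral_congr fun θ hθ =>
          (intervalIntegral.integral_eq_sub_of_hasDerivAt (fun t ht => hF t ht θ hθ) ?_).symm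
        exact (hG.comp (f := fun t => (t, θ)) (by fun_prop) fun t ht => ⟨ht, hθ⟩).intervalIntegrable
    _ = ∫ t in c..d, ∫ θ in a..b, G t θ :=
        intervalIntegral_intervalIntegral_swap
          ((hGswap.integrableOn_compact (isCompact_uIcc.prod isCompact_uIcc)).mono_set
            (prod_mono uIoc_subset_uIcc uIoc_subset_uIcc))
    _ = 0 := by simp [intervalIntegral.integral_congr hG0]

theorem cos_add_I_mul_sin_mul_ne_zero {w : ℂ} (hw : 0 < w.re) (θ : ℝ) :
    (Real.cos θ : ℂ) + I * Real.sin θ * w ≠ 0 := by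
  have hcs := Real.sin_sq_add_cos_sq θ
  generalize Real.sin θ = s at *
  generalize Real.cos θ = c at *
  intro h
  have hs : s = 0 := by simpa [hw.ne'] using congrArg Complex.im h
  have hc : c = 0 := by simpa [hs] using congrArg Complex.re h
  simp [hs, hc] at hcs

section ComplexBanachAlgebra

variable {𝔸 : Type*} [NormedRing 𝔸] [NormedAlgebra ℂ 𝔸] [CompleteSpace 𝔸]

theorem spectrum_smul_one_add_smul [Nontrivial 𝔸] (α β : ℂ) (x : 𝔸) :
    spectrum ℂ (α • 1 + β • x) = (fun μ => α + β * μ) '' spectrum ℂ x := by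
  have h := spectrum.map_polynomial_aeval_of_nonempty x (.C α + .C β * .X) (spectrum.nonempty x)
  simp only [map_add, map_mul, Polynomial.aeval_C, Polynomial.aeval_X, Polynomial.eval_add,
    Polynomial.eval_mul, Polynomial.eval_C, Polynomial.eval_X] at h
  rwa [Algebra.algebraMap_eq_smul_one, ← Algebra.smul_def] at h

theorem isUnit_smul_one_add_smul {α β : ℂ} {x : 𝔸}
    (h : ∀ μ ∈ spectrum ℂ x, α + β * μ ≠ 0) : IsUnit (α • (1 : 𝔸) + β • x) := by
  nontriviality 𝔸
  rw [← spectrum.zero_notMem_iff ℂ, spectrum_smul_one_add_smul]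
  rintro ⟨μ, hμ, hzero⟩
  exact h μ hμ hzero

theorem re_pos_of_mem_spectrum_lineMap {x : 𝔸}
    (hx : ∀ μ ∈ spectrum ℂ x, 0 < μ.re) {t : ℝ} (ht : t ∈ Icc 0 1) :
    ∀ μ ∈ spectrum ℂ (AffineMap.lineMap (1 : 𝔸) x t), 0 < μ.re := by
  rcases subsingleton_or_nontrivial 𝔸 with h𝔸 | h𝔸
  · simp [spectrum.of_subsingleton]
  rw [AffineMap.lineMap_apply_module, ← Complex.coe_smul, ← Complex.coe_smul,
    spectrum_smul_one_add_smul]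
  rintro _ ⟨μ, hμ, rfl⟩
  have hμ_re := hx μ hμ
  simp only [add_re, mul_re, ofReal_re, ofReal_im, zero_mul, sub_zero]
  rcases ht.2.lt_or_eq with ht1 | rfl
  · nlinarith [mul_nonneg ht.1 hμ_re.le]
  · simpa using hμ_re

end ComplexBanachAlgebra

section Rotation

variable {𝔸 : Type*} [NormedRing 𝔸] [NormedAlgebra ℂ 𝔸]

noncomputable def rotDen (x : 𝔸) (θ : ℝ) : 𝔸 := (Real.cos θ : ℂ) • 1 + (I * Real.sin θ) • x

noncomputable def rotNum (x : 𝔸) (θ : ℝ) : 𝔸 := (Real.cos θ : ℂ) • x + (I * Real.sin θ) • 1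

noncomputable def rotated (x : 𝔸) (θ : ℝ) : 𝔸 := (rotDen x θ)⁻¹ʳ * rotNum x θ

theorem isUnit_rotDen [CompleteSpace 𝔸] {x : 𝔸} (hx : ∀ μ ∈ spectrum ℂ x, 0 < μ.re) (θ : ℝ) :
    IsUnit (rotDen x θ) :=
  isUnit_smul_one_add_smul fun μ hμ => by
    simpa only [mul_assoc] using cos_add_I_mul_sin_mul_ne_zero (hx μ hμ) θ

theorem cos_smul_rotDen_sub_sin_smul_rotNum (x : 𝔸) (θ : ℝ) :
    (Real.cos θ : ℂ) • rotDen x θ - (I * Real.sin θ) • rotNum x θ = 1 := by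
  have hcs : (Real.cos θ : ℂ) ^ 2 + (Real.sin θ : ℂ) ^ 2 = 1 := by
    exact_mod_cast Real.cos_sq_add_sin_sq θ
  have h : (Real.cos θ : ℂ) * Real.cos θ - I * Real.sin θ * (I * Real.sin θ) = 1 := by
    linear_combination hcs - (Real.sin θ : ℂ) ^ 2 * I_sq
  calc _ = ((Real.cos θ : ℂ) * Real.cos θ - I * Real.sin θ * (I * Real.sin θ)) • (1 : 𝔸) := by
        rw [rotDen, rotNum]; module
    _ = 1 := by rw [h, one_smul]

theorem hasDerivAt_cos_smul_add_I_mul_sin_smul (a b : 𝔸) (θ : ℝ) :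
    HasDerivAt (fun θ : ℝ => (Real.cos θ : ℂ) • a + (I * Real.sin θ) • b)
      (I • ((Real.cos θ : ℂ) • b + (I * Real.sin θ) • a)) θ := by
  have hcos := ((Real.hasDerivAt_cos θ).ofReal_comp).smul_const a
  have hsin := (((Real.hasDerivAt_sin θ).ofReal_comp).const_mul I).smul_const b
  refine (hcos.add hsin).congr_deriv ?_
  rw [show ((-Real.sin θ : ℝ) : ℂ) = I * (I * Real.sin θ) by
    rw [ofReal_neg]; linear_combination -(Real.sin θ : ℂ) * I_sq]
  module

theorem hasDerivAt_rotDen (x : 𝔸) (θ : ℝ) : HasDerivAt (rotDen x) (I • rotNum x θ) θ :=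
  hasDerivAt_cos_smul_add_I_mul_sin_smul 1 x θ

theorem hasDerivAt_rotNum (x : 𝔸) (θ : ℝ) : HasDerivAt (rotNum x) (I • rotDen x θ) θ :=
  hasDerivAt_cos_smul_add_I_mul_sin_smul x 1 θ

variable [CompleteSpace 𝔸]

theorem hasDerivAt_rotated {x : 𝔸} {θ : ℝ} (hu : IsUnit (rotDen x θ)) :
    HasDerivAt (rotated x) (I • (1 - rotated x θ ^ 2)) θ := by
  refine (((hasDerivAt_rotDen x θ).ringInverse hu).mul (hasDerivAt_rotNum x θ)).congr_deriv ?_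
  simp only [rotated, pow_two, smul_sub, mul_smul_comm, smul_mul_assoc, neg_mul, mul_assoc,
    Ring.inverse_mul_cancel _ hu]
  module

theorem hasDerivAt_sin_smul_inverse_rotDen {x : 𝔸} {θ : ℝ} (hu : IsUnit (rotDen x θ)) :
    HasDerivAt (fun θ : ℝ => (Real.sin θ : ℂ) • (rotDen x θ)⁻¹ʳ) ((rotDen x θ)⁻¹ʳ ^ 2) θ := by
  refine (((Real.hasDerivAt_sin θ).ofReal_comp).smul
    ((hasDerivAt_rotDen x θ).ringInverse hu)).congr_deriv ?_
  set v := (rotDen x θ)⁻¹ʳ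
  have hv (y : 𝔸) : v * (rotDen x θ * y) = y := Ring.inverse_mul_cancel_left _ _ hu
  symm
  calc v ^ 2 = v * ((Real.cos θ : ℂ) • rotDen x θ - (I * Real.sin θ) • rotNum x θ) * v := by
        rw [cos_smul_rotDen_sub_sin_smul_rotNum, mul_one, pow_two]
    _ = _ := by
        simp only [mul_sub, sub_mul, mul_smul_comm, smul_mul_assoc, mul_assoc, hv]
        module

theorem continuous_inverse_rotDen {x : 𝔸} (hu : ∀ θ, IsUnit (rotDen x θ)) :
    Continuous fun θ => (rotDen x θ)⁻¹ʳ :=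
  continuous_iff_continuousAt.2 fun θ => ((hasDerivAt_rotDen x θ).ringInverse (hu θ)).continuousAt

theorem integral_inverse_rotDen_sq_mul {x : 𝔸} (hu : ∀ θ, IsUnit (rotDen x θ)) (c : 𝔸) :
    ∫ θ in 0..π, (rotDen x θ)⁻¹ʳ ^ 2 * c = 0 := by
  have hderiv : ∀ θ ∈ uIcc 0 π, HasDerivAt
      (fun θ : ℝ => (Real.sin θ : ℂ) • (rotDen x θ)⁻¹ʳ * c) ((rotDen x θ)⁻¹ʳ ^ 2 * c) θ :=
    fun θ _ => (hasDerivAt_sin_smul_inverse_rotDen (hu θ)).mul_const c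
  have hcont : Continuous fun θ => (rotDen x θ)⁻¹ʳ ^ 2 * c :=
    ((continuous_inverse_rotDen hu).pow 2).mul continuous_const
  simp [intervalIntegral.integral_eq_sub_of_hasDerivAt hderiv (hcont.intervalIntegrable _ _)]

theorem hasDerivAt_rotated_comp {y : ℝ → 𝔸} {d : 𝔸} {t θ : ℝ} (hy : HasDerivAt y d t)
    (hyd : Commute (y t) d) (hu : IsUnit (rotDen (y t) θ)) :
    HasDerivAt (fun t => rotated (y t) θ) ((rotDen (y t) θ)⁻¹ʳ ^ 2 * d) t := by
  have hA : HasDerivAt (fun t => rotDen (y t) θ) ((I * Real.sin θ) • d) t :=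
    (hy.const_smul (I * Real.sin θ)).const_add ((Real.cos θ : ℂ) • 1)
  have hB : HasDerivAt (fun t => rotNum (y t) θ) ((Real.cos θ : ℂ) • d) t :=
    (hy.const_smul (Real.cos θ : ℂ)).add_const ((I * Real.sin θ) • 1)
  refine ((hA.ringInverse hu).mul hB).congr_deriv ?_
  set v := (rotDen (y t) θ)⁻¹ʳ
  have hvd : Commute v d :=
    (((Commute.one_left d).smul_left _).add_left (hyd.smul_left _)).ringInverse_left
  have hv : v = (Real.cos θ : ℂ) • 1 - (I * Real.sin θ) • (v * rotNum (y t) θ) := by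
    calc v = v * ((Real.cos θ : ℂ) • rotDen (y t) θ - (I * Real.sin θ) • rotNum (y t) θ) := by
          rw [cos_smul_rotDen_sub_sin_smul_rotNum, mul_one]
      _ = _ := by rw [mul_sub, mul_smul_comm, mul_smul_comm, Ring.inverse_mul_cancel _ hu]
  symm
  calc v ^ 2 * d = v * d * v := by rw [pow_two, mul_assoc, mul_assoc, hvd.eq]
    _ = v * d * ((Real.cos θ : ℂ) • 1 - (I * Real.sin θ) • (v * rotNum (y t) θ)) := by
        rw [← hv]
    _ = _ := by
        simp only [mul_sub, mul_smul_comm, smul_mul_assoc, neg_mul, mul_one, mul_assoc]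
        module

theorem integral_rotated {x : 𝔸} (hx : ∀ μ ∈ spectrum ℂ x, 0 < μ.re) :
    ∫ θ in 0..π, rotated x θ = (π : ℂ) • 1 := by
  set y : ℝ → 𝔸 := fun t => AffineMap.lineMap (1 : 𝔸) x t
  have hu : ∀ t ∈ uIcc 0 1, ∀ θ, IsUnit (rotDen (y t) θ) := fun t ht =>
    isUnit_rotDen (re_pos_of_mem_spectrum_lineMap hx (by rwa [uIcc_of_le zero_le_one] at ht))
  have hcomm (t : ℝ) : Commute (y t) (x - 1) := by
    simp only [y, AffineMap.lineMap_apply_module]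
    exact ((Commute.one_left _).smul_left _).add_left
      (((Commute.refl x).sub_right (Commute.one_right x)).smul_left _)
  have hG : ContinuousOn (fun p : ℝ × ℝ => (rotDen (y p.1) p.2)⁻¹ʳ ^ 2 * (x - 1))
      (uIcc 0 1 ×ˢ uIcc 0 π) := fun p hp =>
    have hcont : Continuous fun p : ℝ × ℝ => rotDen (y p.1) p.2 := by unfold rotDen y; fun_prop
    ((hcont.continuousAt.ringInverse (hu p.1 hp.1 p.2)).pow 2 |>.mul
      continuousAt_const).continuousWithinAt
  have key := intervalIntegral_sub_eq_zero_of_hasDerivAt_of_integral_eq_zero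
    (F := fun t θ => rotated (y t) θ)
    (fun t ht θ _ => hasDerivAt_rotated_comp AffineMap.hasDerivAt_lineMap (hcomm t) (hu t ht θ))
    hG (fun t ht => integral_inverse_rotDen_sq_mul (hu t ht) _)
  have hone : ∀ θ, rotated (1 : 𝔸) θ = 1 := fun θ =>
    Ring.inverse_mul_cancel _ (by simpa [y] using hu 0 left_mem_uIcc θ)
  have hcont : Continuous (rotated x) :=
    continuous_iff_continuousAt.2 fun θ => (hasDerivAt_rotated (isUnit_rotDen hx θ)).continuousAt
  simp only [y, AffineMap.lineMap_apply_zero, AffineMap.lineMap_apply_one, hone] at key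
  rwa [intervalIntegral.integral_sub (hcont.intervalIntegrable _ _) intervalIntegrable_const,
    sub_eq_zero, intervalIntegral.integral_const, sub_zero, ← Complex.coe_smul] at key

end Rotation

/-- if all eigenvalues of `E` have positive real part, then for `θ ∈ [0,π]`
the matrix `cos θ·𝟙 + i sin θ·E` is invertible, `E(θ)` solves `E'(θ) = i(𝟙 − E(θ)²)` with
`E(0) = E`, and `∫₀^π E(θ) dθ = π·𝟙`. -/
theorem stmt13 (n : ℕ) (E : Matrix (Fin n) (Fin n) ℂ)
    (hE : ∀ μ ∈ spectrum ℂ E, 0 < μ.re) :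
    (∀ θ ∈ Set.Icc (0:ℝ) Real.pi,
      IsUnit ((Real.cos θ : ℂ) • (1 : Matrix (Fin n) (Fin n) ℂ) + (Complex.I * Real.sin θ) • E)) ∧
    Erot E 0 = E ∧
    (∀ θ ∈ Set.Icc (0:ℝ) Real.pi,
      HasDerivAt (Erot E) (Complex.I • ((1 : Matrix (Fin n) (Fin n) ℂ) - (Erot E θ)^2)) θ) ∧
    (∫ θ in (0:ℝ)..Real.pi, Erot E θ) = (Real.pi : ℂ) • (1 : Matrix (Fin n) (Fin n) ℂ) := by
  have hErot : Erot E = rotated E :=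
    funext fun θ => by rw [Erot, Matrix.nonsing_inv_eq_ringInverse]; rfl
  have hu := isUnit_rotDen hE
  refine ⟨fun θ _ => hu θ, by simp [Erot], fun θ _ => hErot ▸ hasDerivAt_rotated (hu θ),
    hErot ▸ integral_rotated hE⟩
end

section
/- The characteristic polynomial det(r²T + r(R+Rᵀ) + Q − k²v²𝟙), where T, Q are the real matrices of the Cosserat surface-wave problem and R is the corresponding coupling matrix, is a degree-6 polynomial in r with real coefficients of the form r⁶ + P₁r⁴ + P₂r² + P₃ (only even powers of r appear); consequently, if r is a root then so are −r, r̄ and −r̄, and if no root is real then exactly three roots have positive imaginary part. -/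
open Matrix

set_option maxHeartbeats 2000000

/-- Every monic cubic over `ℂ` splits into linear factors. -/
lemma cubic_split (P1 P2 P3 : ℂ) :
    ∃ x1 x2 x3 : ℂ, ∀ x : ℂ, x^3 + P1*x^2 + P2*x + P3 = (x - x1)*(x - x2)*(x - x3) := by
  obtain ⟨x1, hx1⟩ := Complex.exists_root (f := Polynomial.X^3 + Polynomial.C P1 * Polynomial.X^2
    + Polynomial.C P2 * Polynomial.X + Polynomial.C P3) (by
      have hd : (Polynomial.X^3 + Polynomial.C P1 * Polynomial.X^2
          + Polynomial.C P2 * Polynomial.X + Polynomial.C P3 : Polynomial ℂ).degree = 3 := by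
        compute_degree!
      rw [hd]; norm_num)
  have h1 : x1^3 + P1*x1^2 + P2*x1 + P3 = 0 := by
    simpa [Polynomial.IsRoot] using hx1
  obtain ⟨s, hs⟩ := IsAlgClosed.exists_pow_nat_eq ((P1 + x1)^2 - 4*(P2 + P1*x1 + x1^2))
    (n := 2) (by norm_num)
  refine ⟨x1, (-(P1 + x1) + s)/2, (-(P1 + x1) - s)/2, fun x => ?_⟩
  linear_combination h1 + (x - x1)/4 * hs


/-- The matrix `T` of the Cosserat surface-wave problem. (`lam` stands for λe.) -/
noncomputable def cosT (μe μc lam Lc γ k : ℝ) : Matrix (Fin 3) (Fin 3) ℝ :=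
  k^2 • !![μe+μc, 0, 0; 0, 2*μe+lam, 0; 0, 0, μe*Lc^2*γ]

/-- The coupling matrix `R`. -/
noncomputable def cosR (μe μc lam k : ℝ) : Matrix (Fin 3) (Fin 3) ℝ :=
  k • !![0, k*lam, 0; k*(μe-μc), 0, 0; 2*μc, 0, 0]

/-- The matrix `Q`. -/
noncomputable def cosQ (μe μc lam Lc γ k : ℝ) : Matrix (Fin 3) (Fin 3) ℝ :=
  !![k^2*(2*μe+lam), 0, 0; 0, k^2*(μe+μc), -2*μc*k; 0, -2*μc*k, k^2*(μe*Lc^2*γ) + 4*μc]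

/-- The characteristic function `r ↦ det(r²T + r(R+Rᵀ) + Q − k²v²𝟙)`. -/
noncomputable def cosChar (μe μc lam Lc γ k v : ℝ) (r : ℂ) : ℂ :=
  (r^2 • (cosT μe μc lam Lc γ k).map Complex.ofReal
    + r • ((cosR μe μc lam k + (cosR μe μc lam k)ᵀ).map Complex.ofReal)
    + (cosQ μe μc lam Lc γ k).map Complex.ofReal
    - ((k^2*v^2 : ℝ) : ℂ) • (1 : Matrix (Fin 3) (Fin 3) ℂ)).det

/-- the characteristic determinant is an even degree-6 polynomial with real
coefficients; roots come in quadruples `r, −r, r̄, −r̄`; and if no root is real, exactly three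
roots (with multiplicity) have positive imaginary part. -/
theorem stmt15 (μe μc lam Lc γ k v : ℝ) (hk : 0 < k)
    (h1 : 0 < μe + μc) (h2 : 0 < 2*μe + lam) (h3 : 0 < μe*Lc^2*γ) :
    (∃ c P1 P2 P3 : ℝ, c ≠ 0 ∧ ∀ r : ℂ,
        cosChar μe μc lam Lc γ k v r = (c : ℂ) * (r^6 + P1*r^4 + P2*r^2 + P3)) ∧
    (∀ r : ℂ, cosChar μe μc lam Lc γ k v r = 0 →
        cosChar μe μc lam Lc γ k v (-r) = 0 ∧
        cosChar μe μc lam Lc γ k v (starRingEnd ℂ r) = 0 ∧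
        cosChar μe μc lam Lc γ k v (-(starRingEnd ℂ r)) = 0) ∧
    ((∀ r : ℂ, cosChar μe μc lam Lc γ k v r = 0 → r.im ≠ 0) →
      ∃ r1 r2 r3 : ℂ, 0 < r1.im ∧ 0 < r2.im ∧ 0 < r3.im ∧
        ∃ c : ℂ, c ≠ 0 ∧ ∀ r : ℂ,
          cosChar μe μc lam Lc γ k v r
            = c * ((r - r1)*(r + r1)*(r - r2)*(r + r2)*(r - r3)*(r + r3))) := by
  have key : ∀ r : ℂ, cosChar μe μc lam Lc γ k v r = ((((k^2*(μe+μc))*(k^2*(2*μe+lam))*(k^2*(μe*Lc^2*γ)) : ℝ)) : ℂ)*r^6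
      + (((k^2*(μe+μc))*(k^2*(2*μe+lam))*(k^2*(μe*Lc^2*γ) + 4*μc - k^2*v^2) + (k^2*(μe+μc))*(k^2*(μe+μc) - k^2*v^2)*(k^2*(μe*Lc^2*γ)) + (k^2*(2*μe+lam) - k^2*v^2)*(k^2*(2*μe+lam))*(k^2*(μe*Lc^2*γ)) - (k^2*(μe*Lc^2*γ))*(k^2*(lam+μe-μc))^2 - (k^2*(2*μe+lam))*(2*k*μc)^2 : ℝ) : ℂ)*r^4
      + (((k^2*(μe+μc))*(k^2*(μe+μc) - k^2*v^2)*(k^2*(μe*Lc^2*γ) + 4*μc - k^2*v^2) + (k^2*(2*μe+lam) - k^2*v^2)*(k^2*(2*μe+lam))*(k^2*(μe*Lc^2*γ) + 4*μc - k^2*v^2) + (k^2*(2*μe+lam) - k^2*v^2)*(k^2*(μe+μc) - k^2*v^2)*(k^2*(μe*Lc^2*γ)) - (k^2*(μe+μc))*(-2*μc*k)^2 - (k^2*(μe*Lc^2*γ) + 4*μc - k^2*v^2)*(k^2*(lam+μe-μc))^2 - (k^2*(μe+μc) - k^2*v^2)*(2*k*μc)^2 + 2*(k^2*(lam+μe-μc))*(2*k*μc)*(-2*μc*k)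 : ℝ) : ℂ)*r^2
      + (((k^2*(2*μe+lam) - k^2*v^2)*(k^2*(μe+μc) - k^2*v^2)*(k^2*(μe*Lc^2*γ) + 4*μc - k^2*v^2) - (k^2*(2*μe+lam) - k^2*v^2)*(-2*μc*k)^2 : ℝ) : ℂ) := by
    intro r
    simp only [cosChar, cosT, cosR, cosQ, Matrix.det_fin_three, Matrix.map_apply,
      Matrix.add_apply, Matrix.sub_apply, Matrix.smul_apply, Matrix.transpose_apply,
      Matrix.one_apply, Matrix.cons_val', Matrix.cons_val_zero, Matrix.cons_val_one,
      Matrix.head_cons, Matrix.head_fin_const, Matrix.empty_val', Matrix.cons_val_fin_one,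
      Matrix.cons_val_two, Matrix.tail_cons, smul_eq_mul, Matrix.vecHead, Matrix.vecTail,
      Function.comp]
    simp [Matrix.vecHead, Matrix.vecTail]
    ring
  set C6 : ℝ := (k^2*(μe+μc))*(k^2*(2*μe+lam))*(k^2*(μe*Lc^2*γ)) with hC6def
  set C4 : ℝ := (k^2*(μe+μc))*(k^2*(2*μe+lam))*(k^2*(μe*Lc^2*γ) + 4*μc - k^2*v^2) + (k^2*(μe+μc))*(k^2*(μe+μc) - k^2*v^2)*(k^2*(μe*Lc^2*γ)) + (k^2*(2*μe+lam) - k^2*v^2)*(k^2*(2*μe+lam))*(k^2*(μe*Lc^2*γ)) - (k^2*(μe*Lc^2*γ))*(k^2*(lam+μe-μc))^2 - (k^2*(2*μe+lam))*(2*k*μc)^2 with hC4def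
  set C2 : ℝ := (k^2*(μe+μc))*(k^2*(μe+μc) - k^2*v^2)*(k^2*(μe*Lc^2*γ) + 4*μc - k^2*v^2) + (k^2*(2*μe+lam) - k^2*v^2)*(k^2*(2*μe+lam))*(k^2*(μe*Lc^2*γ) + 4*μc - k^2*v^2) + (k^2*(2*μe+lam) - k^2*v^2)*(k^2*(μe+μc) - k^2*v^2)*(k^2*(μe*Lc^2*γ)) - (k^2*(μe+μc))*(-2*μc*k)^2 - (k^2*(μe*Lc^2*γ) + 4*μc - k^2*v^2)*(k^2*(lam+μe-μc))^2 - (k^2*(μe+μc) - k^2*v^2)*(2*k*μc)^2 + 2*(k^2*(lam+μe-μc))*(2*k*μc)*(-2*μc*k) with hC2def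
  set C0 : ℝ := (k^2*(2*μe+lam) - k^2*v^2)*(k^2*(μe+μc) - k^2*v^2)*(k^2*(μe*Lc^2*γ) + 4*μc - k^2*v^2) - (k^2*(2*μe+lam) - k^2*v^2)*(-2*μc*k)^2 with hC0def
  have hC6pos : 0 < C6 := by
    have hk2 : (0:ℝ) < k^2 := by positivity
    exact mul_pos (mul_pos (mul_pos hk2 h1) (mul_pos hk2 h2)) (mul_pos hk2 h3)
  have hC6 : C6 ≠ 0 := ne_of_gt hC6pos
  have hC6C : (C6 : ℂ) ≠ 0 := by exact_mod_cast hC6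
  have hform : ∀ r : ℂ, cosChar μe μc lam Lc γ k v r
      = (C6:ℂ) * (r^6 + ((C4/C6 : ℝ):ℂ)*r^4 + ((C2/C6 : ℝ):ℂ)*r^2 + ((C0/C6 : ℝ):ℂ)) := by
    intro r
    rw [key r]
    push_cast
    field_simp
  refine ⟨⟨C6, C4/C6, C2/C6, C0/C6, hC6, hform⟩, ?_, ?_⟩
  · -- root quadruples
    intro r hr
    have hconj : cosChar μe μc lam Lc γ k v (starRingEnd ℂ r)
        = starRingEnd ℂ (cosChar μe μc lam Lc γ k v r) := by
      rw [key r, key (starRingEnd ℂ r)]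
      simp [_root_.map_add, _root_.map_mul, map_pow, Complex.conj_ofReal]
    have hneg : ∀ t : ℂ, cosChar μe μc lam Lc γ k v (-t) = cosChar μe μc lam Lc γ k v t := by
      intro t; rw [key t, key (-t)]; ring
    refine ⟨by rw [hneg r, hr], by rw [hconj, hr, map_zero], ?_⟩
    rw [hneg (starRingEnd ℂ r), hconj, hr, map_zero]
  · -- no real roots ⟹ three roots in upper half plane
    intro hnoreal
    obtain ⟨x1, x2, x3, hcub⟩ := cubic_split ((C4/C6 : ℝ):ℂ) ((C2/C6 : ℝ):ℂ) ((C0/C6 : ℝ):ℂ)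
    have hfac : ∀ r : ℂ, cosChar μe μc lam Lc γ k v r
        = (C6:ℂ) * ((r^2 - x1)*(r^2 - x2)*(r^2 - x3)) := by
      intro r
      rw [hform r, ← hcub (r^2)]
      ring
    have pick : ∀ x : ℂ, (∀ r : ℂ, r^2 = x → r.im ≠ 0) →
        ∃ ρ : ℂ, 0 < ρ.im ∧ ρ^2 = x := by
      intro x hx
      obtain ⟨s, hs⟩ := IsAlgClosed.exists_pow_nat_eq x (n := 2) (by norm_num)
      rcases (hx s hs).lt_or_gt with h | h
      · exact ⟨-s, by simpa using h, by rw [neg_pow]; simpa using hs⟩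
      · exact ⟨s, h, hs⟩
    have hx1 := pick x1 (fun r hr => hnoreal r (by rw [hfac r, hr]; ring))
    have hx2 := pick x2 (fun r hr => hnoreal r (by rw [hfac r, hr]; ring))
    have hx3 := pick x3 (fun r hr => hnoreal r (by rw [hfac r, hr]; ring))
    obtain ⟨r1, hr1im, hr1⟩ := hx1
    obtain ⟨r2, hr2im, hr2⟩ := hx2
    obtain ⟨r3, hr3im, hr3⟩ := hx3
    refine ⟨r1, r2, r3, hr1im, hr2im, hr3im, (C6:ℂ), hC6C, fun r => ?_⟩
    rw [hfac r, ← hr1, ← hr2, ← hr3]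
    ring
end
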